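/- arXiv:2604.17296 — 9 statements merged into one kernel-verified Lean document; each statement's English description precedes it below -/
import Mathlib

section
/- If X : α → Prop is extensionally definite and φ : α → β → Prop is such that for every y : β the predicate (fun x => φ x y) is intensionally definite, then the predicate (fun y => ∀ x, X x → φ x y) is intensionally definite. That is, intensionally definite conditions are closed under ED-bounded universal quantification; the proof uses only intuitionistic logic. -/
/-- A predicate is intensionally definite (ID) iff every instance is decided. -/
def ID {α : Type*} (F : α → Prop) : Prop := ∀ x, F x ∨ ¬ F x

/-- A predicate is extensionally definite (ED) iff quantification restricted to it
preserves intensional definiteness. -/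
def ED {α : Type*} (X : α → Prop) : Prop :=
  ∀ F : α → Prop, (∀ x, X x → (F x ∨ ¬ F x)) →
    ((∃ x, X x ∧ F x) ∨ ¬ (∃ x, X x ∧ F x))

theorem id_closed_under_ed_bounded_forall {α β : Type*} (X : α → Prop) (φ : α → β → Prop)
    (hX : ED X) (hφ : ∀ y : β, ID (fun x => φ x y)) :
    ID (fun y => ∀ x, X x → φ x y) := by
  intro y
  rcases hX (fun x => ¬ φ x y) (fun x _ => (hφ y x).symm.imp id fun h hn => hn h) with ⟨x, hx, hnx⟩ | h
  · exact Or.inr fun hall => hnx (hall x hx)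
  · exact Or.inl fun x hx => (hφ y x).resolve_right fun hn => h ⟨x, hx, hn⟩
end

section
/- Separation: if X : α → Prop is extensionally definite and F : α → Prop is intensionally definite, then the intersection (fun x => X x ∧ F x) is extensionally definite; the proof uses only intuitionistic logic. -/
theorem ed_separation {α : Type*} (X F : α → Prop) (hX : ED X) (hF : ID F) :
    ED (fun x => X x ∧ F x) := by
  intro G hG
  have h := hX (fun x => F x ∧ G x) (by
    intro x hx
    rcases hF x with hf | hf
    · rcases hG x ⟨hx, hf⟩ with hg | hg
      · exact Or.inl ⟨hf, hg⟩
      · exact Or.inr fun ⟨_, hg'⟩ => hg hg'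
    · exact Or.inr fun ⟨hf', _⟩ => hf hf')
  rcases h with ⟨x, hx, hf, hg⟩ | h
  · exact Or.inl ⟨x, ⟨hx, hf⟩, hg⟩
  · exact Or.inr fun ⟨x, ⟨hx, hf⟩, hg⟩ => h ⟨x, hx, hf, hg⟩
end

section
/- Generalized Union: if X : α → Prop is extensionally definite and ψ : α → β → Prop is such that for every x with X x the predicate ψ x : β → Prop is extensionally definite, then the predicate (fun y => ∃ x, X x ∧ ψ x y) is extensionally definite; the proof uses only intuitionistic logic. -/
theorem ed_generalized_union {α β : Type*} (X : α → Prop) (ψ : α → β → Prop)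
    (hX : ED X) (hψ : ∀ x, X x → ED (ψ x)) :
    ED (fun y => ∃ x, X x ∧ ψ x y) := by
  intro F hF
  have h := hX (fun x => ∃ y, ψ x y ∧ F y) (fun x hx =>
    hψ x hx F (fun y hy => hF y ⟨x, hx, hy⟩))
  rcases h with ⟨x, hx, y, hxy, hFy⟩ | h
  · exact Or.inl ⟨y, ⟨x, hx, hxy⟩, hFy⟩
  · exact Or.inr fun ⟨y, ⟨x, hx, hxy⟩, hFy⟩ => h ⟨x, hx, y, hxy, hFy⟩
end

section
/- Replacement: if X : α → Prop is extensionally definite and ψ : α → β → Prop is functional on X, i.e. ∀ x, X x → ∃! y, ψ x y, then the image predicate (fun y => ∃ x, X x ∧ ψ x y) is extensionally definite; the proof uses only intuitionistic logic. -/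
theorem ed_replacement {α β : Type*} (X : α → Prop) (ψ : α → β → Prop)
    (hX : ED X) (hψ : ∀ x, X x → ∃! y, ψ x y) :
    ED (fun y => ∃ x, X x ∧ ψ x y) := by
  intro F hF
  have hG := hX (fun x => ∃ y, ψ x y ∧ F y) ?_
  · rcases hG with ⟨x, hx, y, hy, hFy⟩ | h
    · exact Or.inl ⟨y, ⟨x, hx, hy⟩, hFy⟩
    · refine Or.inr fun ⟨y, ⟨x, hx, hxy⟩, hFy⟩ => h ⟨x, hx, y, hxy, hFy⟩
  · intro x hx
    obtain ⟨y, hy, -⟩ := hψ x hx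
    rcases hF y ⟨x, hx, hy⟩ with hFy | hFy
    · exact Or.inl ⟨y, hy, hFy⟩
    · refine Or.inr fun ⟨y', hy', hFy'⟩ => ?_
      obtain ⟨y₀, hy₀, huniq⟩ := hψ x hx
      exact hFy ((huniq y hy ▸ huniq y' hy') ▸ hFy')
end

section
/- Assume identity on α is intensionally definite, i.e. ∀ x y : α, x = y ∨ x ≠ y. Then every extensionally definite predicate X : α → Prop is intensionally definite; the proof uses only intuitionistic logic. -/
theorem ed_implies_id_of_decidable_eq {α : Type*}
    (hEq : ∀ x y : α, x = y ∨ x ≠ y) (X : α → Prop) (hX : ED X) :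
    ID X := by
  intro x
  rcases hX (fun y => y = x) (fun y _ => hEq y x) with ⟨y, hy, rfl⟩ | h
  · exact Or.inl hy
  · exact Or.inr fun hx => h ⟨x, hx, rfl⟩
end

section
/- Adjunction: assume identity on α is intensionally definite, i.e. ∀ x y : α, x = y ∨ x ≠ y. If X : α → Prop is extensionally definite and a : α, then the predicate (fun x => X x ∨ x = a) is extensionally definite; the proof uses only intuitionistic logic. -/
theorem ed_adjunction {α : Type*}
    (hEq : ∀ x y : α, x = y ∨ x ≠ y) (X : α → Prop) (hX : ED X) (a : α) :
    ED (fun x => X x ∨ x = a) := by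
  intro F hF
  rcases hF a (Or.inr rfl) with hFa | hFa
  · exact Or.inl ⟨a, Or.inr rfl, hFa⟩
  · rcases hX F (fun x hx => hF x (Or.inl hx)) with ⟨x, hx, hFx⟩ | h
    · exact Or.inl ⟨x, Or.inl hx, hFx⟩
    · refine Or.inr ?_
      rintro ⟨x, hx | rfl, hFx⟩
      · exact h ⟨x, hx, hFx⟩
      · exact hFa hFx
end

section
/- Nested spheres of possible determinate truths: in a bimodal frame, for all worlds w, w' with R_D w w' and every S : W → Prop, the following three implications hold: (i) (Dia_G (Box_D S)) w → (Dia_G (Box_D S)) w'; (ii) (Dia_G (Box_D S)) w' → (Dia_D (Box_D S)) w'; (iii) (Dia_D (Box_D S)) w' → (Dia_D (Box_D S)) w. In other words, writing Poss_G(w) for the truths S with ◇_G □_D S at w and Poss_D(w) for those with ◇_D □_D S at w, we have Poss_G(w) ⊆ Poss_G(w') ⊆ Poss_D(w') ⊆ Poss_D(w) whenever w ≤_D w'. -/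
/-- A bimodal frame: worlds with a determination accessibility `RD` and a
generation accessibility `RG`, both preorders, with `RG` contained in `RD`
and the mixed convergence property. -/
structure BimodalFrame (W : Type*) where
  RD : W → W → Prop
  RG : W → W → Prop
  rd_refl : ∀ w, RD w w
  rd_trans : ∀ w₁ w₂ w₃, RD w₁ w₂ → RD w₂ w₃ → RD w₁ w₃
  rg_refl : ∀ w, RG w w
  rg_trans : ∀ w₁ w₂ w₃, RG w₁ w₂ → RG w₂ w₃ → RG w₁ w₃
  subsump : ∀ w w', RG w w' → RD w w'
  mixed : ∀ w₀ w₁ w₂, RG w₀ w₁ → RD w₀ w₂ → ∃ w₃, RD w₁ w₃ ∧ RG w₂ w₃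

/-- D-necessity. -/
def BoxD {W : Type*} (F : BimodalFrame W) (S : W → Prop) (w : W) : Prop :=
  ∀ w', F.RD w w' → S w'

/-- G-possibility. -/
def DiaG {W : Type*} (F : BimodalFrame W) (S : W → Prop) (w : W) : Prop :=
  ∃ w', F.RG w w' ∧ S w'

/-- D-possibility. -/
def DiaD {W : Type*} (F : BimodalFrame W) (S : W → Prop) (w : W) : Prop :=
  ∃ w', F.RD w w' ∧ S w'

/-- Nested spheres of possible determinate truths:
`Poss_G(w) ⊆ Poss_G(w') ⊆ Poss_D(w') ⊆ Poss_D(w)` whenever `w ≤_D w'`. -/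
theorem nested_spheres {W : Type*} (F : BimodalFrame W) (w w' : W)
    (hww' : F.RD w w') (S : W → Prop) :
    (DiaG F (BoxD F S) w → DiaG F (BoxD F S) w') ∧
    (DiaG F (BoxD F S) w' → DiaD F (BoxD F S) w') ∧
    (DiaD F (BoxD F S) w' → DiaD F (BoxD F S) w) := by
  refine ⟨?_, ?_, ?_⟩
  · rintro ⟨u, hgu, hbox⟩
    obtain ⟨w₃, hd, hg⟩ := F.mixed w u w' hgu hww'
    exact ⟨w₃, hg, fun v hv => hbox v (F.rd_trans u w₃ v hd hv)⟩
  · rintro ⟨u, hgu, hbox⟩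
    exact ⟨u, F.subsump _ _ hgu, hbox⟩
  · rintro ⟨u, hdu, hbox⟩
    exact ⟨u, F.rd_trans _ _ _ hww' hdu, hbox⟩
end

section
/- Link between intuitionistic forcing and the Gödel translation: for every S4 Kripke model (W, ≤, V) whose valuation is monotone (∀ p w w', w ≤ w' → V p w → V p w'), every intuitionistic propositional formula φ, and every world w: w ⊩ φ (intuitionistic Kripke forcing) if and only if w ⊨ φ^g (classical satisfaction of the Gödel translation). -/
/-- Intuitionistic propositional formulas over a type `A` of atoms. -/
inductive IForm (A : Type*) where
  | atom : A → IForm A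
  | bot : IForm A
  | and : IForm A → IForm A → IForm A
  | or : IForm A → IForm A → IForm A
  | imp : IForm A → IForm A → IForm A

/-- Modal propositional formulas over a type `A` of atoms. -/
inductive MForm (A : Type*) where
  | atom : A → MForm A
  | bot : MForm A
  | and : MForm A → MForm A → MForm A
  | or : MForm A → MForm A → MForm A
  | imp : MForm A → MForm A → MForm A
  | box : MForm A → MForm A

/-- The Gödel translation from intuitionistic to modal formulas. -/
def godel {A : Type*} : IForm A → MForm A
  | .atom p => .box (.atom p)
  | .bot => .bot
  | .and φ ψ => .and (godel φ) (godel ψ)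
  | .or φ ψ => .or (godel φ) (godel ψ)
  | .imp φ ψ => .box (.imp (godel φ) (godel ψ))

/-- Classical satisfaction of a modal formula in a Kripke model. -/
def MSat {W A : Type*} (R : W → W → Prop) (V : A → W → Prop) : W → MForm A → Prop
  | w, .atom p => V p w
  | _, .bot => False
  | w, .and φ ψ => MSat R V w φ ∧ MSat R V w ψ
  | w, .or φ ψ => MSat R V w φ ∨ MSat R V w ψ
  | w, .imp φ ψ => MSat R V w φ → MSat R V w ψ
  | w, .box φ => ∀ w', R w w' → MSat R V w' φ


/-- Intuitionistic Kripke forcing of an intuitionistic formula. -/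
def Force {W A : Type*} (R : W → W → Prop) (V : A → W → Prop) : W → IForm A → Prop
  | w, .atom p => V p w
  | _, .bot => False
  | w, .and φ ψ => Force R V w φ ∧ Force R V w ψ
  | w, .or φ ψ => Force R V w φ ∨ Force R V w ψ
  | w, .imp φ ψ => ∀ w', R w w' → Force R V w' φ → Force R V w' ψ

/-- Link between intuitionistic forcing and classical satisfaction of the
Gödel translation, in any S4 Kripke model with monotone valuation. -/
theorem forcing_iff_godel {W A : Type*} (R : W → W → Prop) (V : A → W → Prop)
    (hrefl : ∀ w, R w w) (htrans : ∀ w₁ w₂ w₃, R w₁ w₂ → R w₂ w₃ → R w₁ w₃)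
    (hmono : ∀ p w w', R w w' → V p w → V p w')
    (φ : IForm A) (w : W) :
    Force R V w φ ↔ MSat R V w (godel φ) := by
  induction φ generalizing w with
  | atom p =>
    constructor
    · intro h w' hw'; exact hmono p w w' hw' h
    · intro h; exact h w (hrefl w)
  | bot => exact Iff.rfl
  | and φ ψ ihφ ihψ => exact and_congr (ihφ w) (ihψ w)
  | or φ ψ ihφ ihψ => exact or_congr (ihφ w) (ihψ w)
  | imp φ ψ ihφ ihψ =>
    constructor
    · intro h w' hw' hφ; exact (ihψ w').mp (h w' hw' ((ihφ w').mpr hφ))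
    · intro h w' hw' hφ; exact (ihψ w').mpr (h w' hw' ((ihφ w').mp hφ))
end

section
/- Semantic Gödel mirroring (propositional case): an intuitionistic propositional formula φ is forced at every world of every Kripke model with monotone valuation (i.e., φ is intuitionistically Kripke-valid) if and only if its Gödel translation φ^g is satisfied at every world of every S4 Kripke model (with arbitrary, not necessarily monotone, valuation). -/
theorem force_godel {W A : Type} (R : W → W → Prop) (V : A → W → Prop)
    (φ : IForm A) (w : W) :
    Force R (fun p w => ∀ w', R w w' → V p w') w φ ↔ MSat R V w (godel φ) := by
  induction φ generalizing w with
  | atom p => rfl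
  | bot => rfl
  | and φ ψ ihφ ihψ => exact and_congr (ihφ w) (ihψ w)
  | or φ ψ ihφ ihψ => exact or_congr (ihφ w) (ihψ w)
  | imp φ ψ ihφ ihψ =>
    constructor
    · intro h w' hw hφ
      exact (ihψ w').mp (h w' hw ((ihφ w').mpr hφ))
    · intro h w' hw hφ
      exact (ihψ w').mpr (h w' hw ((ihφ w').mp hφ))

theorem force_congr {W A : Type} (R : W → W → Prop) (V V' : A → W → Prop)
    (h : ∀ p w, V p w ↔ V' p w) (φ : IForm A) (w : W) :
    Force R V w φ ↔ Force R V' w φ := by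
  induction φ generalizing w with
  | atom p => exact h p w
  | bot => rfl
  | and φ ψ ihφ ihψ => exact and_congr (ihφ w) (ihψ w)
  | or φ ψ ihφ ihψ => exact or_congr (ihφ w) (ihψ w)
  | imp φ ψ ihφ ihψ =>
    constructor
    · intro hh w' hw hφ
      exact (ihψ w').mp (hh w' hw ((ihφ w').mpr hφ))
    · intro hh w' hw hφ
      exact (ihψ w').mpr (hh w' hw ((ihφ w').mp hφ))

/-- Semantic Gödel mirroring (propositional case): `φ` is intuitionistically
Kripke-valid iff its Gödel translation `φ^g` is valid on all S4 Kripke models. -/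
theorem godel_mirroring {A : Type} (φ : IForm A) :
    (∀ (W : Type) (R : W → W → Prop) (V : A → W → Prop),
      (∀ w, R w w) → (∀ w₁ w₂ w₃, R w₁ w₂ → R w₂ w₃ → R w₁ w₃) →
      (∀ p w w', R w w' → V p w → V p w') →
      ∀ w, Force R V w φ) ↔
    (∀ (W : Type) (R : W → W → Prop) (V : A → W → Prop),
      (∀ w, R w w) → (∀ w₁ w₂ w₃, R w₁ w₂ → R w₂ w₃ → R w₁ w₃) →
      ∀ w, MSat R V w (godel φ)) := by
  constructor
  · intro h W R V hrefl htrans w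
    have mono : ∀ p w w', R w w' → (∀ u, R w u → V p u) → (∀ u, R w' u → V p u) :=
      fun p w w' hww hw u hu => hw u (htrans _ _ _ hww hu)
    exact (force_godel R V φ w).mp
      (h W R (fun p w => ∀ w', R w w' → V p w') hrefl htrans mono w)
  · intro h W R V hrefl htrans hmono w
    have := (force_godel R V φ w).mpr (h W R V hrefl htrans w)
    exact (force_congr R _ V
      (fun p w => ⟨fun hv => hv w (hrefl w), fun hv w' hw => hmono p w w' hw hv⟩)
      φ w).mp this
end
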